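/- Let (C, N, (A_i)_{i∈N}, k) be an approval election with n = |N|, k ≥ 1, and (k+1) dividing n. Let (W, π) be a Droop valid assignment whose Monroe score is maximal among all Droop valid assignments for this election. Then W provides Droop-FPJR. -/

import Mathlib

/-!
Suppose `S` witnesses a violation of Droop-FPJR for `(ℓ, T)`, let `q = n/(k+1)` and let `W'` be
the fewer than `ℓ` members of `W` approved by someone in `S`. The voters of `S` satisfied by `π`
are assigned into `W'`, so more than `(|T| - |W'|)·q` of them are unsatisfied, and each voter of
`S` approves at least `ℓ - |T ∩ W'|` candidates of `T \ W'`. Double counting these approvals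
yields a candidate `c ∉ W` approved by more than `q` unsatisfied voters of `S`. Only `q` voters go
to the dummy, so one of them is assigned to some `w ∈ W`. Replacing `w` by `c`, giving `c` a block
of `q` of these voters including that one, and handing the rest of `w`'s voters the places this
block vacates, raises the Monroe score by at least one, against maximality.
-/

/-- A group `S ⊆ N` is Droop weakly `(ℓ,T)`-cohesive if `|A_i ∩ T| ≥ ℓ` for every
`i ∈ S` and `|S| > |T|·n/(k+1)`.  An outcome `W` provides Droop-FPJR if for every
`ℓ ∈ {1,...,k}`, every `T ⊆ C`, and every Droop weakly `(ℓ,T)`-cohesive group `S`,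
we have `|(⋃_{i∈S} A_i) ∩ W| ≥ ℓ`. -/
def DroopFPJR {V K : Type*} [DecidableEq V] [DecidableEq K]
    (N : Finset V) (C : Finset K) (A : V → Finset K) (k : ℕ) (W : Finset K) : Prop :=
  ∀ ℓ : ℕ, 1 ≤ ℓ → ℓ ≤ k → ∀ T ⊆ C, ∀ S ⊆ N,
    (∀ i ∈ S, ℓ ≤ (A i ∩ T).card) →
    (S.card : ℚ) > (T.card : ℚ) * (N.card : ℚ) / ((k : ℚ) + 1) →
    ℓ ≤ ((S.biUnion A) ∩ W).card

open Finset

section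

variable {V K : Type*} [DecidableEq K]

structure IsDroopAssignment (N : Finset V) (C : Finset K) (k : ℕ) (d : K) (W : Finset K)
    (π : V → K) : Prop where
  subset : W ⊆ C
  card_eq : #W = k
  mem : ∀ i ∈ N, π i ∈ insert d W
  quota : ∀ c ∈ W, #{i ∈ N | π i = c} = #N / (k + 1)
  dummy_quota : #{i ∈ N | π i = d} = #N / (k + 1)

def monroeScore (N : Finset V) (A : V → Finset K) (π : V → K) : ℕ :=
  #{i ∈ N | π i ∈ A i}

theorem exists_involutive_swapping [DecidableEq V] {B H : Finset V} (hBH : Disjoint B H)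
    (hcard : #B = #H) :
    ∃ t : V → V, Function.Involutive t ∧ (∀ v ∈ B, t v ∈ H) ∧ (∀ v ∈ H, t v ∈ B) ∧
      ∀ v, v ∉ B → v ∉ H → t v = v := by
  let e := equivOfCardEq hcard
  have hB : ∀ {v}, v ∈ H → v ∉ B := fun hv hvB => disjoint_left.mp hBH hvB hv
  refine ⟨fun v => if hv : v ∈ B then e ⟨v, hv⟩ else if hv : v ∈ H then e.symm ⟨v, hv⟩ else v,
    fun v => ?_, fun v hv => by simp [hv], fun v hv => by simp [hv, hB hv], fun v hvB hvH => by
      simp [hvB, hvH]⟩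
  by_cases hvB : v ∈ B
  · simp [hvB, hB (e ⟨v, hvB⟩).2]
  · by_cases hvH : v ∈ H <;> simp [hvB, hvH]

theorem card_filter_comp_of_involutive {N : Finset V} {t : V → V} (ht : Function.Involutive t)
    (htN : ∀ v ∈ N, t v ∈ N) (p : V → Prop) [DecidablePred p] :
    #{v ∈ N | p (t v)} = #{v ∈ N | p v} :=
  card_nbij' t t
    (fun v hv => by
      simp only [mem_coe, mem_filter] at hv ⊢
      exact ⟨htN v hv.1, hv.2⟩)
    (fun v hv => by
      simp only [mem_coe, mem_filter] at hv ⊢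
      exact ⟨htN v hv.1, (ht v).symm ▸ hv.2⟩)
    (fun v _ => ht v) (fun v _ => ht v)

theorem card_filter_lt_card_filter_of_trade [DecidableEq V] {N Q B : Finset V} {p p' : V → Prop}
    [DecidablePred p] [DecidablePred p'] (hQN : Q ⊆ N) (hQ : ∀ i ∈ Q, p' i ∧ ¬p i)
    (hrest : ∀ i ∈ N, i ∉ Q → i ∉ B → p i → p' i) (hBQ : #B < #Q) :
    #{i ∈ N | p i} < #{i ∈ N | p' i} := by
  have hQsub : Q ⊆ {i ∈ N | p' i} := fun i hi => mem_filter.mpr ⟨hQN hi, (hQ i hi).1⟩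
  have hsub : {i ∈ N | p i} ⊆ ({i ∈ N | p' i} \ Q) ∪ B := by
    intro i hi
    obtain ⟨hiN, hpi⟩ := mem_filter.mp hi
    by_cases hiB : i ∈ B
    · exact mem_union_right _ hiB
    have hiQ : i ∉ Q := fun hiQ => (hQ i hiQ).2 hpi
    exact mem_union_left _ (mem_sdiff.mpr ⟨mem_filter.mpr ⟨hiN, hrest i hiN hiQ hiB hpi⟩, hiQ⟩)
  calc #{i ∈ N | p i} ≤ #(({i ∈ N | p' i} \ Q) ∪ B) := card_le_card hsub
    _ ≤ #({i ∈ N | p' i} \ Q) + #B := card_union_le _ _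
    _ < #{i ∈ N | p' i} := by
      rw [card_sdiff_of_subset hQsub]
      have := card_le_card hQsub
      omega

namespace IsDroopAssignment

variable {N : Finset V} {C : Finset K} {k : ℕ} {d : K} {W : Finset K} {π : V → K}

theorem comp_involutive (h : IsDroopAssignment N C k d W π) {t : V → V}
    (ht : Function.Involutive t) (htN : ∀ v ∈ N, t v ∈ N) :
    IsDroopAssignment N C k d W (π ∘ t) where
  subset := h.subset
  card_eq := h.card_eq
  mem i hi := h.mem (t i) (htN i hi)
  quota c hc := (card_filter_comp_of_involutive ht htN (π · = c)).trans (h.quota c hc)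
  dummy_quota := (card_filter_comp_of_involutive ht htN (π · = d)).trans h.dummy_quota

theorem swap (h : IsDroopAssignment N C k d W π) (hdC : d ∉ C) {w c : K} (hw : w ∈ W)
    (hcC : c ∈ C) (hcW : c ∉ W) :
    IsDroopAssignment N C k d (insert c (W.erase w)) (Equiv.swap w c ∘ π) := by
  have hdw : d ≠ w := fun hdw => hdC (hdw ▸ h.subset hw)
  have hdc : d ≠ c := fun hdc => hdC (hdc ▸ hcC)
  have hcard (x : K) :
      #{i ∈ N | (Equiv.swap w c ∘ π) i = x} = #{i ∈ N | π i = Equiv.swap w c x} := by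
    simp only [Function.comp_apply, Equiv.swap_apply_eq_iff]
  refine ⟨insert_subset hcC ((erase_subset _ _).trans h.subset), ?_, fun i hi => ?_,
    fun x hx => ?_, ?_⟩
  · rw [card_insert_of_notMem (fun hc => hcW (mem_of_mem_erase hc)), card_erase_of_mem hw,
      ← h.card_eq]
    have := card_pos.mpr ⟨w, hw⟩
    omega
  · rcases mem_insert.mp (h.mem i hi) with hd | hW
    · simp [hd, Equiv.swap_apply_of_ne_of_ne hdw hdc]
    · by_cases hiw : π i = w
      · simp [hiw]
      · have hic : π i ≠ c := fun hic => hcW (hic ▸ hW)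
        simp [Equiv.swap_apply_of_ne_of_ne hiw hic, hiw, hW]
  · rw [hcard]
    rcases mem_insert.mp hx with rfl | hx
    · simpa using h.quota w hw
    · obtain ⟨hxw, hxW⟩ := mem_erase.mp hx
      rw [Equiv.swap_apply_of_ne_of_ne hxw fun hxc : x = c => hcW (hxc ▸ hxW)]
      exact h.quota x hxW
  · rw [hcard, Equiv.swap_apply_of_ne_of_ne hdw hdc]
    exact h.dummy_quota

theorem exists_exchange [DecidableEq V] (h : IsDroopAssignment N C k d W π) (hdC : d ∉ C)
    {w c : K} (hw : w ∈ W) (hcC : c ∈ C) (hcW : c ∉ W) {Q : Finset V} (hQN : Q ⊆ N)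
    (hQ : #Q = #N / (k + 1)) :
    ∃ π' : V → K, IsDroopAssignment N C k d (insert c (W.erase w)) π' ∧ (∀ i ∈ Q, π' i = c) ∧
      ∀ i ∈ N, i ∉ Q → π i ≠ w → π' i = π i := by
  set cls := {i ∈ N | π i = w}
  obtain ⟨t, ht, htB, htH, htfix⟩ := exists_involutive_swapping (B := cls \ Q) (H := Q \ cls)
    disjoint_sdiff_sdiff (card_sdiff_comm ((h.quota w hw).trans hQ.symm))
  have htN : ∀ i ∈ N, t i ∈ N := by
    intro i hi
    by_cases hiB : i ∈ cls \ Q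
    · exact hQN (mem_sdiff.mp (htB i hiB)).1
    by_cases hiH : i ∈ Q \ cls
    · exact (mem_filter.mp (mem_sdiff.mp (htH i hiH)).1).1
    rwa [htfix i hiB hiH]
  refine ⟨Equiv.swap w c ∘ π ∘ t, (h.comp_involutive ht htN).swap hdC hw hcC hcW,
    fun i hi => ?_, fun i hiN hiQ hiw => ?_⟩
  · have hti : π (t i) = w := by
      by_cases hicls : i ∈ cls
      · rw [htfix i (fun hiB => (mem_sdiff.mp hiB).2 hi) (fun hiH => (mem_sdiff.mp hiH).2 hicls)]
        exact (mem_filter.mp hicls).2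
      · exact (mem_filter.mp (mem_sdiff.mp (htH i (mem_sdiff.mpr ⟨hi, hicls⟩))).1).2
    simp [hti]
  · have hicls : i ∉ cls := fun hi => hiw (mem_filter.mp hi).2
    have hic : π i ≠ c := by
      rintro hic
      rcases mem_insert.mp (hic ▸ h.mem i hiN) with hcd | hcW'
      · exact hdC (hcd ▸ hcC)
      · exact hcW hcW'
    simp only [Function.comp_apply]
    rw [htfix i (fun hiB => hicls (mem_sdiff.mp hiB).1) (fun hiH => hiQ (mem_sdiff.mp hiH).1)]
    exact Equiv.swap_apply_of_ne_of_ne hiw hic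

theorem exists_monroeScore_lt [DecidableEq V] (h : IsDroopAssignment N C k d W π) (hdC : d ∉ C)
    {A : V → Finset K} {c : K} (hcC : c ∈ C) (hcW : c ∉ W) {R : Finset V} (hRN : R ⊆ N)
    (hR : #N / (k + 1) < #R) (hRc : ∀ i ∈ R, c ∈ A i) (hRπ : ∀ i ∈ R, π i ∉ A i) :
    ∃ W' π', IsDroopAssignment N C k d W' π' ∧ monroeScore N A π < monroeScore N A π' := by
  obtain ⟨i₀, hi₀R, hi₀d⟩ : ∃ i ∈ R, π i ≠ d := by
    by_contra! hall
    have := card_le_card fun i hi => mem_filter.mpr ⟨hRN hi, hall i hi⟩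
    rw [h.dummy_quota] at this
    omega
  have hw : π i₀ ∈ W := (mem_insert.mp (h.mem i₀ (hRN hi₀R))).resolve_left hi₀d
  set cls := {i ∈ N | π i = π i₀}
  have hi₀cls : i₀ ∈ cls := mem_filter.mpr ⟨hRN hi₀R, rfl⟩
  have hq : 1 ≤ #N / (k + 1) := h.quota _ hw ▸ card_pos.mpr ⟨i₀, hi₀cls⟩
  obtain ⟨Q, hi₀Q, hQR, hQ⟩ :=
    exists_subsuperset_card_eq (singleton_subset_iff.mpr hi₀R) (by simpa using hq) hR.le
  obtain ⟨π', hπ', hQc, hrest⟩ := h.exists_exchange hdC hw hcC hcW (hQR.trans hRN) hQ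
  refine ⟨_, π', hπ', card_filter_lt_card_filter_of_trade (B := cls \ Q) (hQR.trans hRN)
    (fun i hi => ⟨hQc i hi ▸ hRc i (hQR hi), hRπ i (hQR hi)⟩) (fun i hiN hiQ hiB hsat => ?_) ?_⟩
  · rwa [hrest i hiN hiQ fun hi => hiB (mem_sdiff.mpr ⟨mem_filter.mpr ⟨hiN, hi⟩, hiQ⟩)]
  · have := card_sdiff_add_card_inter cls Q
    have := card_pos.mpr ⟨i₀, mem_inter.mpr ⟨hi₀cls, singleton_subset_iff.mp hi₀Q⟩⟩
    have : #cls = _ := h.quota _ hw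
    omega

end IsDroopAssignment

theorem card_filter_satisfied_le {A : V → Finset K} {π : V → K} {S : Finset V} {W : Finset K}
    {q : ℕ} (hsat : ∀ i ∈ S, π i ∈ A i → π i ∈ W) (hquota : ∀ x ∈ W, #{i ∈ S | π i = x} ≤ q) :
    #{i ∈ S | π i ∈ A i} ≤ q * #(S.biUnion A ∩ W) :=
  card_le_mul_card_image_of_maps_to
    (fun i hi => mem_inter.mpr ⟨mem_biUnion.mpr ⟨i, (mem_filter.mp hi).1, (mem_filter.mp hi).2⟩,
      hsat i (mem_filter.mp hi).1 (mem_filter.mp hi).2⟩) q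
    (fun x hx => (card_le_card (filter_subset_filter _ (filter_subset _ _))).trans
      (hquota x (mem_inter.mp hx).2))

-- With `a = t - w ≥ 1` and `b = w - m < ℓ - m`: `(a + b) q < (a q + 1)(b + 1) ≤ s (ℓ - m)`.
theorem sub_mul_lt_mul_sub {t w m ℓ q s : ℕ} (hm : m ≤ w) (hw : w < ℓ) (hℓ : ℓ ≤ t)
    (hs : t * q < s + w * q) : (t - m) * q < s * (ℓ - m) := by
  obtain ⟨a, rfl⟩ : ∃ a, t = w + a + 1 := ⟨t - w - 1, by omega⟩
  obtain ⟨b, rfl⟩ : ∃ b, w = m + b := ⟨w - m, by omega⟩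
  obtain ⟨u, hu⟩ : ∃ u, ℓ - m = b + u + 1 := ⟨ℓ - m - b - 1, by omega⟩
  rw [show m + b + a + 1 - m = a + b + 1 by omega, hu]
  have hs' : (a + 1) * q + 1 ≤ s := by nlinarith
  nlinarith [Nat.mul_le_mul hs' (Nat.le_add_left (b + 1) u), Nat.zero_le (a * q * b)]

theorem exists_lt_card_filter_unsatisfied_approvers {A : V → Finset K} {π : V → K}
    {S : Finset V} {T W : Finset K} {q ℓ : ℕ} (hsat : ∀ i ∈ S, π i ∈ A i → π i ∈ W)
    (hquota : ∀ x ∈ W, #{i ∈ S | π i = x} ≤ q) (hcoh : ∀ i ∈ S, ℓ ≤ #(A i ∩ T))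
    (hS : #T * q < #S) (hfail : #(S.biUnion A ∩ W) < ℓ) :
    ∃ c ∈ T, c ∉ W ∧ q < #{i ∈ S | c ∈ A i ∧ π i ∉ A i} := by
  set W' := S.biUnion A ∩ W
  set U := {i ∈ S | π i ∉ A i}
  set D := T \ W'
  have hU : #T * q < #U + #W' * q := by
    have : #{i ∈ S | π i ∈ A i} ≤ q * #W' := card_filter_satisfied_le hsat hquota
    have : #{i ∈ S | π i ∈ A i} + #U = #S := card_filter_add_card_filter_not _
    linarith
  have hℓT : ℓ ≤ #T := by
    obtain ⟨i, hi⟩ := card_pos.mp (pos_of_gt hS)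
    exact (hcoh i hi).trans (card_le_card inter_subset_right)
  have happ : ∀ i ∈ S, ℓ - #(W' ∩ T) ≤ #{c ∈ D | c ∈ A i} := by
    intro i hi
    have hsub : A i ∩ T ⊆ {c ∈ D | c ∈ A i} ∪ (W' ∩ T) := by
      intro x hx
      obtain ⟨hxA, hxT⟩ := mem_inter.mp hx
      by_cases hxW' : x ∈ W'
      · exact mem_union_right _ (mem_inter.mpr ⟨hxW', hxT⟩)
      · exact mem_union_left _ (mem_filter.mpr ⟨mem_sdiff.mpr ⟨hxT, hxW'⟩, hxA⟩)
    have := (hcoh i hi).trans ((card_le_card hsub).trans (card_union_le _ _))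
    omega
  obtain ⟨c, hcD, hc⟩ : ∃ c ∈ D, q < #{i ∈ U | c ∈ A i} := by
    refine exists_lt_of_sum_lt ?_
    calc ∑ _c ∈ D, q = (#T - #(W' ∩ T)) * q := by
          rw [sum_const, smul_eq_mul, card_sdiff]
      _ < #U * (ℓ - #(W' ∩ T)) :=
        sub_mul_lt_mul_sub (card_le_card inter_subset_left) hfail hℓT hU
      _ ≤ ∑ i ∈ U, #{c ∈ D | c ∈ A i} := by
        rw [← smul_eq_mul]
        exact card_nsmul_le_sum _ _ _ fun i hi => happ i (mem_filter.mp hi).1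
      _ = ∑ c ∈ D, #{i ∈ U | c ∈ A i} :=
        sum_card_bipartiteAbove_eq_sum_card_bipartiteBelow (fun i c => c ∈ A i)
  obtain ⟨hcT, hcW'⟩ := mem_sdiff.mp hcD
  refine ⟨c, hcT, fun hcW => ?_, hc.trans_le (card_le_card fun i hi => ?_)⟩
  · obtain ⟨i, hi⟩ := card_pos.mp (pos_of_gt hc)
    obtain ⟨hiU, hci⟩ := mem_filter.mp hi
    exact hcW' (mem_inter.mpr ⟨mem_biUnion.mpr ⟨i, (mem_filter.mp hiU).1, hci⟩, hcW⟩)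
  · obtain ⟨hiU, hci⟩ := mem_filter.mp hi
    obtain ⟨hiS, hiπ⟩ := mem_filter.mp hiU
    exact mem_filter.mpr ⟨hiS, hci, hiπ⟩

end

theorem stmt_7_general {V K : Type*} [DecidableEq V] [DecidableEq K]
    (N : Finset V) (C : Finset K) (A : V → Finset K) (k : ℕ)
    (hA : ∀ i ∈ N, A i ⊆ C)
    (d : K) (hd : d ∉ C)
    (W : Finset K) (π : V → K)
    (hWC : W ⊆ C) (hWcard : W.card = k)
    (hπ : ∀ i ∈ N, π i ∈ insert d W)
    (hquota : ∀ c ∈ W, (N.filter (fun i => π i = c)).card = N.card / (k + 1))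
    (hdummy : (N.filter (fun i => π i = d)).card = N.card / (k + 1))
    (hmax : ∀ (W' : Finset K) (π' : V → K), W' ⊆ C → W'.card = k →
      (∀ i ∈ N, π' i ∈ insert d W') →
      (∀ c ∈ W', (N.filter (fun i => π' i = c)).card = N.card / (k + 1)) →
      (N.filter (fun i => π' i = d)).card = N.card / (k + 1) →
      (N.filter (fun i => π' i ∈ A i)).card ≤ (N.filter (fun i => π i ∈ A i)).card) :
    DroopFPJR N C A k W := by
  have h : IsDroopAssignment N C k d W π := ⟨hWC, hWcard, hπ, hquota, hdummy⟩
  intro ℓ _ _ T hTC S hSN hcoh hsize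
  by_contra! hfail
  have hS : #T * (#N / (k + 1)) < #S := by
    have : ((#T * (#N / (k + 1)) : ℕ) : ℚ) ≤ #T * #N / (k + 1) := by
      rw [Nat.cast_mul, mul_div_assoc]
      gcongr
      have := Nat.cast_div_le (α := ℚ) (m := #N) (n := k + 1)
      push_cast at this
      exact this
    exact_mod_cast this.trans_lt hsize
  obtain ⟨c, hcT, hcW, hc⟩ := exists_lt_card_filter_unsatisfied_approvers
    (fun i hi hsat => (mem_insert.mp (hπ i (hSN hi))).resolve_left
      fun hdi => hd (hdi ▸ hA i (hSN hi) hsat))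
    (fun x hx => (card_le_card (filter_subset_filter _ hSN)).trans (hquota x hx).le)
    hcoh hS hfail
  obtain ⟨W', π', h', hlt⟩ := h.exists_monroeScore_lt hd (hTC hcT) hcW
    ((filter_subset _ _).trans hSN) hc (fun i hi => (mem_filter.mp hi).2.1)
    (fun i hi => (mem_filter.mp hi).2.2)
  exact (hmax W' π' h'.subset h'.card_eq h'.mem h'.quota h'.dummy_quota).not_gt hlt

/-- Suppose `(k+1) ∣ n` and `(W, π)` is a Droop valid assignment
(`W ⊆ C`, `|W| = k`, `π : N → W ∪ {d}` with every preimage class—including that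
of the dummy candidate `d ∉ C`—of size exactly `n/(k+1)`) whose Monroe score is
maximal among all Droop valid assignments.  Then `W` provides Droop-FPJR. -/
theorem stmt_7 {V K : Type*} [DecidableEq V] [DecidableEq K]
    (N : Finset V) (C : Finset K) (A : V → Finset K) (k : ℕ)
    (hA : ∀ i ∈ N, A i ⊆ C) (hk : 1 ≤ k) (hdvd : (k + 1) ∣ N.card)
    (d : K) (hd : d ∉ C)
    (W : Finset K) (π : V → K)
    (hWC : W ⊆ C) (hWcard : W.card = k)
    (hπ : ∀ i ∈ N, π i ∈ insert d W)
    (hquota : ∀ c ∈ W, (N.filter (fun i => π i = c)).card = N.card / (k + 1))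
    (hdummy : (N.filter (fun i => π i = d)).card = N.card / (k + 1))
    (hmax : ∀ (W' : Finset K) (π' : V → K), W' ⊆ C → W'.card = k →
      (∀ i ∈ N, π' i ∈ insert d W') →
      (∀ c ∈ W', (N.filter (fun i => π' i = c)).card = N.card / (k + 1)) →
      (N.filter (fun i => π' i = d)).card = N.card / (k + 1) →
      (N.filter (fun i => π' i ∈ A i)).card ≤ (N.filter (fun i => π i ∈ A i)).card) :
    DroopFPJR N C A k W :=
  stmt_7_general N C A k hA d hd W π hWC hWcard hπ hquota hdummy hmax
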